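/- Let A ∈ ℝ^{m×n}, b ∈ ℝⁿ with b_k > 0 for all k, c ∈ ℝⁿ, y ∈ ℝᵐ, and let λ ∈ ℝᵐ satisfy λ > 0 and A'λ > c componentwise. For p ∈ ℕ, p ≥ 1, define φ_p(λ;y) := ⟨λ,y⟩ + Σ_{k=1}^n [ ln Γ(1 + p·b_k)/p − b_k·ln( p·((A'λ)_k − c_k) ) ] − Σ_{k=1}^n ln((A'λ)_k − c_k)/p − Σ_{j=1}^m ln(λ_j)/p − ((m+n)/p)·ln p. Then: (i) for every such p, φ_p(λ;y) = ⟨λ,y⟩ + (1/p)·ln ∫_{ℝⁿ₊} e^{p(⟨c,x⟩ + Σ_k b_k ln x_k − ⟨λ, Ax⟩)} dx − Σ_{j=1}^m ln(p·λ_j)/p; and (ii) lim_{p→∞} φ_p(λ;y) = ⟨λ,y⟩ − Σ_{k=1}^n b_k·ln( ((A'λ)_k − c_k) / (e^{−1}·b_k) ). -/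

import Mathlib

/-!
Put `d = A'λ - c > 0`. The exponent `p(⟨c,x⟩ + Σ bₖ ln xₖ - ⟨λ,Ax⟩)` equals
`Σₖ (p bₖ ln xₖ - p dₖ xₖ)`, so the integral over the orthant factorizes into the Gamma integrals
`∫₀^∞ u^{p bₖ} e^{-p dₖ u} du = Γ(p bₖ + 1) / (p dₖ)^{p bₖ + 1}`, and taking logarithms gives (i).

For (ii) only `ln Γ(1 + t) = t ln t - t + o(t)` is needed. It follows from
`t^t e^{-t} ≤ Γ(1 + t) ≤ (t + 1)^{t + 1} e^{-t}`: the lower bound restricts the Gamma integral to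
`u ≥ t`, the upper one bounds `u^t e^{-s u}` by its maximum `(t/s)^t e^{-t}` with `s = t/(t + 1)`
and integrates the leftover factor `e^{-u/(t + 1)}`.
-/

open MeasureTheory Filter Topology

open Real Set

namespace Real

lemma integral_Ici_exp_mul_log_sub_mul {a r : ℝ} (ha : -1 < a) (hr : 0 < r) :
    ∫ u in Ici 0, exp (a * log u - r * u) = (1 / r) ^ (a + 1) * Gamma (a + 1) := by
  rw [integral_Ici_eq_integral_Ioi, ← integral_rpow_mul_exp_neg_mul_Ioi (by linarith) hr]
  refine setIntegral_congr_fun measurableSet_Ioi fun u hu => ?_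
  rw [add_sub_cancel_right, rpow_def_of_pos hu, ← exp_add, mul_comm (log u), sub_eq_add_neg]

lemma rpow_mul_exp_neg_mul_le {t s u : ℝ} (ht : 0 < t) (hs : 0 < s) (hu : 0 < u) :
    u ^ t * exp (-(s * u)) ≤ (t / s) ^ t * exp (-t) := by
  rw [rpow_def_of_pos hu, rpow_def_of_pos (by positivity), ← exp_add, ← exp_add, exp_le_exp,
    log_div ht.ne' hs.ne']
  have hlog : log (s * u / t) ≤ s * u / t - 1 := log_le_sub_one_of_pos (by positivity)
  rw [log_div (by positivity) ht.ne', log_mul hs.ne' hu.ne'] at hlog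
  have hscale : t * (s * u / t - 1) = s * u - t := by field_simp
  nlinarith [mul_le_mul_of_nonneg_left hlog ht.le]

lemma Gamma_one_add_le {t : ℝ} (ht : 0 < t) : Gamma (1 + t) ≤ (t + 1) ^ (t + 1) * exp (-t) := by
  have hrate : -(t + 1)⁻¹ < 0 := neg_lt_zero.2 (by positivity)
  calc Gamma (1 + t) = ∫ u in Ioi 0, exp (-u) * u ^ (1 + t - 1) := Gamma_eq_integral (by linarith)
    _ ≤ ∫ u in Ioi 0, (t + 1) ^ t * exp (-t) * exp (-(t + 1)⁻¹ * u) := by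
      refine setIntegral_mono_on (GammaIntegral_convergent (by linarith))
        ((integrableOn_exp_mul_Ioi hrate 0).const_mul _) measurableSet_Ioi fun u hu => ?_
      have hsplit : exp (-u) * u ^ (1 + t - 1)
          = u ^ t * exp (-(t / (t + 1) * u)) * exp (-(t + 1)⁻¹ * u) := by
        rw [add_sub_cancel_left, mul_comm, mul_assoc, ← exp_add]
        congr 2
        field_simp
        ring
      have hpeak : t / (t / (t + 1)) = t + 1 := by field_simp
      rw [hsplit]
      refine mul_le_mul_of_nonneg_right ?_ (exp_pos _).le
      simpa only [hpeak] using rpow_mul_exp_neg_mul_le ht (by positivity : 0 < t / (t + 1)) hu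
    _ = (t + 1) ^ (t + 1) * exp (-t) := by
      rw [integral_const_mul, integral_exp_mul_Ioi hrate, rpow_add_one (by positivity)]
      field_simp
      simp

lemma rpow_mul_exp_neg_le_Gamma_one_add {t : ℝ} (ht : 0 ≤ t) :
    t ^ t * exp (-t) ≤ Gamma (1 + t) := by
  have hint : IntegrableOn (fun u => exp (-u) * u ^ (1 + t - 1)) (Ioi 0) :=
    GammaIntegral_convergent (by linarith)
  calc t ^ t * exp (-t) = ∫ u in Ioi t, t ^ t * exp (-u) := by
        rw [integral_const_mul, integral_exp_neg_Ioi]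
    _ ≤ ∫ u in Ioi t, exp (-u) * u ^ (1 + t - 1) := by
      refine setIntegral_mono_on ((integrableOn_exp_neg_Ioi t).const_mul _)
        (hint.mono_set (Ioi_subset_Ioi ht)) measurableSet_Ioi fun u hu => ?_
      rw [add_sub_cancel_left, mul_comm]
      gcongr
      exact le_of_lt hu
    _ ≤ ∫ u in Ioi 0, exp (-u) * u ^ (1 + t - 1) :=
      setIntegral_mono_set hint
        (ae_restrict_of_forall_mem measurableSet_Ioi fun u hu =>
          mul_nonneg (exp_pos _).le (rpow_nonneg (le_of_lt hu) _))
        (Ioi_subset_Ioi ht).eventuallyLE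
    _ = Gamma (1 + t) := (Gamma_eq_integral (by linarith)).symm

lemma tendsto_log_Gamma_one_add_div_sub_log :
    Tendsto (fun t => log (Gamma (1 + t)) / t - log t) atTop (𝓝 (-1)) := by
  have hupper : Tendsto (fun t => (1 + 1 / t) * (log (t + 1) - log t) + log t / t - 1) atTop
      (𝓝 (-1)) := by
    have hinv : Tendsto (fun t : ℝ => 1 + 1 / t) atTop (𝓝 (1 + 0)) :=
      tendsto_const_nhds.add (tendsto_const_nhds.div_atTop tendsto_id)
    simpa using ((hinv.mul (tendsto_log_comp_add_sub_log 1)).add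
      isLittleO_log_id_atTop.tendsto_div_nhds_zero).sub_const 1
  refine tendsto_of_tendsto_of_tendsto_of_le_of_le' tendsto_const_nhds hupper ?_ ?_
  · filter_upwards [eventually_gt_atTop 0] with t ht
    have h := log_le_log (by positivity) (rpow_mul_exp_neg_le_Gamma_one_add ht.le)
    rw [log_mul (by positivity) (exp_pos _).ne', log_rpow ht, log_exp] at h
    rw [le_sub_iff_add_le, le_div_iff₀ ht]
    linarith
  · filter_upwards [eventually_gt_atTop 0] with t ht
    have h := log_le_log (Gamma_pos_of_pos (by linarith)) (Gamma_one_add_le ht)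
    rw [log_mul (by positivity) (exp_pos _).ne', log_rpow (by linarith), log_exp] at h
    have hexpand : (1 + 1 / t) * (log (t + 1) - log t) + log t / t - 1 =
        ((t + 1) * log (t + 1) - t) / t - log t := by
      field_simp
      ring
    rw [hexpand]
    gcongr
    linarith

lemma tendsto_log_Gamma_one_add_mul_div_sub_mul_log {B d : ℝ} (hB : 0 < B) (hd : 0 < d) :
    Tendsto (fun s => log (Gamma (1 + s * B)) / s - B * log (s * d)) atTop
      (𝓝 (-(B * log (d / (exp (-1) * B))))) := by
  have h := ((tendsto_log_Gamma_one_add_div_sub_log.comp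
    (tendsto_id.atTop_mul_const hB)).const_mul B).add_const (B * log B - B * log d)
  have hlim : B * -1 + (B * log B - B * log d) = -(B * log (d / (exp (-1) * B))) := by
    rw [log_div hd.ne' (by positivity), log_mul (exp_pos _).ne' hB.ne', log_exp]
    ring
  rw [hlim] at h
  refine h.congr' ?_
  filter_upwards [eventually_gt_atTop 0] with s hs
  simp only [Function.comp_apply, id]
  rw [log_mul hs.ne' hB.ne', log_mul hs.ne' hd.ne']
  field_simp
  ring

end Real

lemma MeasureTheory.setIntegral_univ_pi_prod {ι 𝕜 : Type*} [Fintype ι] [RCLike 𝕜]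
    {E : ι → Type*} [∀ i, MeasurableSpace (E i)] (μ : (i : ι) → Measure (E i))
    [∀ i, SigmaFinite (μ i)] (s : (i : ι) → Set (E i)) (f : (i : ι) → E i → 𝕜) :
    ∫ x in univ.pi s, ∏ i, f i (x i) ∂Measure.pi μ = ∏ i, ∫ u in s i, f i u ∂μ i := by
  rw [Measure.restrict_pi_pi]
  exact integral_fintype_prod_eq_prod f

lemma Matrix.sum_mul_mulVec_eq_sum {m n R : Type*} [Fintype m] [Fintype n] [CommSemiring R]
    (A : Matrix m n R) (l : m → R) (x : n → R) :
    ∑ j, l j * A.mulVec x j = ∑ k, (∑ j, A j k * l j) * x k := by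
  change dotProduct l (A.mulVec x) = _
  rw [Matrix.dotProduct_mulVec]
  simp only [dotProduct, Matrix.vecMul, mul_comm (l _)]

lemma mul_lagrangian_eq_sum {m n : Type*} [Fintype m] [Fintype n] (A : Matrix m n ℝ)
    (b c x : n → ℝ) (l : m → ℝ) (p : ℝ) :
    p * ((∑ k, c k * x k) + (∑ k, b k * log (x k)) - ∑ j, l j * A.mulVec x j) =
      ∑ k, (p * b k * log (x k) - p * ((∑ j, A j k * l j) - c k) * x k) := by
  rw [A.sum_mul_mulVec_eq_sum, ← Finset.sum_add_distrib, ← Finset.sum_sub_distrib, Finset.mul_sum]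
  exact Finset.sum_congr rfl fun k _ => by ring

lemma log_integral_nonneg_exp_sum_mul_log_sub_mul {ι : Type*} [Fintype ι] {a r : ι → ℝ}
    (ha : ∀ i, -1 < a i) (hr : ∀ i, 0 < r i) :
    log (∫ x in {x : ι → ℝ | 0 ≤ x}, exp (∑ i, (a i * log (x i) - r i * x i))) =
      ∑ i, (log (Gamma (a i + 1)) - (a i + 1) * log (r i)) := by
  simp_rw [exp_sum]
  rw [show {x : ι → ℝ | 0 ≤ x} = univ.pi fun _ => Ici 0 from (pi_univ_Ici 0).symm, volume_pi,
    setIntegral_univ_pi_prod _ _ fun i u => exp (a i * log u - r i * u)]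
  simp only [integral_Ici_exp_mul_log_sub_mul (ha _) (hr _)]
  have hGamma : ∀ i, 0 < Gamma (a i + 1) := fun i => Gamma_pos_of_pos (by linarith [ha i])
  rw [log_prod fun i _ => (mul_pos (rpow_pos_of_pos (one_div_pos.2 (hr i)) _) (hGamma i)).ne']
  refine Finset.sum_congr rfl fun i _ => ?_
  rw [log_mul (rpow_pos_of_pos (one_div_pos.2 (hr i)) _).ne' (hGamma i).ne',
    log_rpow (one_div_pos.2 (hr i)), one_div, log_inv]
  ring

/-- **Proposition 2.11 of the paper.** For the problem
`sup{⟨c,x⟩ + Σₖ bₖ ln xₖ : Ax ≤ y, x > 0}` with `b > 0`, `λ > 0` and `A'λ > c`, the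
explicitly defined function `φ_p(λ;y)` equals the `L^p`-norm approximation
`⟨λ,y⟩ + (1/p) ln ∫_{ℝⁿ₊} e^{p(⟨c,x⟩ + Σₖ bₖ ln xₖ - ⟨λ,Ax⟩)} dx - Σⱼ ln(pλⱼ)/p`
for every `p ≥ 1`, and
`lim_{p→∞} φ_p(λ;y) = ⟨λ,y⟩ - Σₖ bₖ ln( ((A'λ)ₖ - cₖ) / (e⁻¹ bₖ) )`. -/
theorem lbf_dual_example (n m : ℕ) (A : Matrix (Fin m) (Fin n) ℝ)
    (b c : Fin n → ℝ) (hb : ∀ k, 0 < b k)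
    (y : Fin m → ℝ) (l : Fin m → ℝ) (hl : ∀ j, 0 < l j)
    (hAl : ∀ k, c k < ∑ j, A j k * l j)
    (φ : ℕ → ℝ)
    (hφ : ∀ p : ℕ, φ p = (∑ j, l j * y j) +
      (∑ k, (Real.log (Real.Gamma (1 + (p : ℝ) * b k)) / p -
        b k * Real.log ((p : ℝ) * ((∑ j, A j k * l j) - c k)))) -
      (∑ k, Real.log ((∑ j, A j k * l j) - c k) / p) -
      (∑ j, Real.log (l j) / p) - (((m : ℝ) + n) / p) * Real.log p) :
    (∀ p : ℕ, 1 ≤ p → φ p = (∑ j, l j * y j) +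
        (1 / (p : ℝ)) * Real.log (∫ x in {x : Fin n → ℝ | 0 ≤ x},
          Real.exp ((p : ℝ) * ((∑ k, c k * x k) + (∑ k, b k * Real.log (x k)) -
            ∑ j, l j * A.mulVec x j))) -
        ∑ j, Real.log ((p : ℝ) * l j) / p) ∧
    Tendsto (fun p : ℕ => φ p) atTop
      (𝓝 ((∑ j, l j * y j) -
        ∑ k, b k * Real.log (((∑ j, A j k * l j) - c k) / (Real.exp (-1) * b k)))) := by
  simp_rw [mul_lagrangian_eq_sum]
  obtain ⟨d, hd_def⟩ : ∃ d : Fin n → ℝ, ∀ k, d k = (∑ j, A j k * l j) - c k := ⟨_, fun _ => rfl⟩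
  have hd : ∀ k, 0 < d k := fun k => hd_def k ▸ sub_pos.mpr (hAl k)
  simp only [← hd_def] at hφ ⊢
  refine ⟨fun p hp => ?_, ?_⟩
  · have hp0 : (0 : ℝ) < p := by exact_mod_cast hp
    have hcount : ((m : ℝ) + n) / p * log p =
        ∑ _k : Fin n, log p / p + ∑ _j : Fin m, log p / p := by
      simp only [Finset.sum_const, Finset.card_univ, Fintype.card_fin, nsmul_eq_mul]
      ring
    have hterm_k : ∀ k, log (Gamma (1 + p * b k)) / p - b k * (log p + log (d k)) -
        log (d k) / p - log p / p =
          1 / p * (log (Gamma (p * b k + 1)) - (p * b k + 1) * (log p + log (d k))) :=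
      fun k => by rw [add_comm _ (1 : ℝ)]; field_simp; ring
    have hterm_j : ∀ j, log (l j) / p + log p / p = (log p + log (l j)) / p := fun j => by ring
    rw [hφ, log_integral_nonneg_exp_sum_mul_log_sub_mul
      (fun k => neg_one_lt_zero.trans (mul_pos hp0 (hb k))) (fun k => mul_pos hp0 (hd k)),
      hcount, Finset.mul_sum]
    simp only [log_mul hp0.ne' (hl _).ne', log_mul hp0.ne' (hd _).ne', ← hterm_k,
      ← hterm_j, Finset.sum_sub_distrib, Finset.sum_add_distrib]
    ring
  · have hGamma := tendsto_finsetSum Finset.univ fun k _ =>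
      (tendsto_log_Gamma_one_add_mul_div_sub_mul_log (hb k) (hd k)).comp
        tendsto_natCast_atTop_atTop
    have hinv (C : ℝ) : Tendsto (fun p : ℕ => C / p) atTop (𝓝 0) :=
      tendsto_const_div_atTop_nhds_zero_nat C
    have hlog : Tendsto (fun p : ℕ => ((m : ℝ) + n) / p * log p) atTop (𝓝 0) := by
      simpa [mul_comm_div] using (isLittleO_log_id_atTop.tendsto_div_nhds_zero.comp
        tendsto_natCast_atTop_atTop).const_mul ((m : ℝ) + n)
    simp only [hφ, ← Finset.sum_div]
    simpa [sub_eq_add_neg] using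
      (((tendsto_const_nhds.add hGamma).sub (hinv _)).sub (hinv _)).sub hlog
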